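/- Let E and F be real normed spaces, C ⊆ E a symmetric convex subset whose linear span is dense in E, and f : C → F a map with ‖f(x)‖ ≤ α‖x‖ for some constant α. Then the following are equivalent: (1) f(0) = 0 and f((x+y)/2) = (f(x)+f(y))/2 for all x, y ∈ C; (2) f(x+y) = f(x)+f(y) whenever x, y, x+y ∈ C; (3) f extends to a bounded linear map E → F. -/

import Mathlib

/-!
For `c ∈ C`, the defect `s ↦ f (s • c) - s • f c` is additive on `[0, 1]`, vanishes at `1`
and is `O(s)`; hence it vanishes on every grid `k / n` and is `O(1 / n)` in between, so `f` is
homogeneous on segments `[0, c]`. As `C` is symmetric and convex, `span C = ⋃_{t > 0} t • C`,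
and `t • c ↦ t • f c` is a well-defined linear map on `span C`, bounded by `α`; it extends to
`E` by density and completeness of `F`. Conversely, comparing `f ((x + y) / 2)` with
`f (x + y) / 2` turns midpoint-affinity into additivity.
-/

open Set Filter

section UnitInterval

variable {F : Type*} [NormedAddCommGroup F] [NormedSpace ℝ F] {h : ℝ → F} {M : ℝ}

lemma map_natCast_mul_of_map_add
    (hadd : ∀ s u, 0 ≤ s → 0 ≤ u → s + u ≤ 1 → h (s + u) = h s + h u)
    (n : ℕ) {s : ℝ} (hs : 0 ≤ s) (hns : n * s ≤ 1) : h (n * s) = (n : ℝ) • h s := by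
  induction n with
  | zero =>
    simpa using hadd 0 0 le_rfl le_rfl (by norm_num)
  | succ n ih =>
    push_cast at hns ⊢
    have hn : (n : ℝ) * s ≤ 1 := by nlinarith
    rw [add_mul, one_mul, hadd _ _ (by positivity) hs (by linarith), ih hn, add_smul, one_smul]

lemma eq_zero_of_map_add_of_norm_le
    (hadd : ∀ s u, 0 ≤ s → 0 ≤ u → s + u ≤ 1 → h (s + u) = h s + h u)
    (hbd : ∀ s ∈ Icc (0 : ℝ) 1, ‖h s‖ ≤ M * s) (h1 : h 1 = 0) {t : ℝ} (ht : t ∈ Icc (0 : ℝ) 1) :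
    h t = 0 := by
  have hM : 0 ≤ M := by simpa [h1] using hbd 1 (right_mem_Icc.2 zero_le_one)
  have hgrid : ∀ n : ℕ, 0 < n → ∀ k : ℕ, (k : ℝ) ≤ n → h (k * (1 / n)) = 0 := by
    intro n hn k hk
    have hn' : (n : ℝ) ≠ 0 := by positivity
    have hunit : h (1 / n) = 0 := by
      have := map_natCast_mul_of_map_add hadd n (s := 1 / n) (by positivity)
        (by rw [mul_one_div_cancel hn'])
      rw [mul_one_div_cancel hn', h1, eq_comm, smul_eq_zero] at this
      exact this.resolve_left hn'
    rw [map_natCast_mul_of_map_add hadd k (by positivity)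
      (by rw [mul_one_div]; exact div_le_one_of_le₀ hk (Nat.cast_nonneg n)), hunit, smul_zero]
  -- `t` lies within `1 / n` above the grid point `⌊n t⌋ / n`, where `h` vanishes.
  have hsmall : ∀ n : ℕ, 0 < n → ‖h t‖ ≤ M * (1 / n) := by
    intro n hn
    have hn' : (0 : ℝ) < n := by exact_mod_cast hn
    set k := ⌊(n : ℝ) * t⌋₊
    have hk : (k : ℝ) ≤ n * t := Nat.floor_le (by nlinarith [ht.1])
    have hk' : (n : ℝ) * t < k + 1 := Nat.lt_floor_add_one _
    set r := t - k * (1 / n)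
    have hr : 0 ≤ r ∧ r ≤ 1 / n := by
      constructor <;> simp only [r] <;> field_simp <;> linarith
    have hkn : (k : ℝ) ≤ n := by nlinarith [ht.2]
    have hsplit : h t = h r := by
      have := hadd (k * (1 / n)) r (by positivity) hr.1 (by simp only [r]; linarith [ht.2])
      rwa [add_sub_cancel, hgrid n hn k hkn, zero_add] at this
    have hkn0 : 0 ≤ (k : ℝ) * (1 / n) := by positivity
    rw [hsplit]
    calc ‖h r‖ ≤ M * r := hbd r ⟨hr.1, by linarith [ht.2]⟩
      _ ≤ M * (1 / n) := mul_le_mul_of_nonneg_left hr.2 hM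
  have hlim := (tendsto_one_div_atTop_nhds_zero_nat.const_mul M).mono_right (by rw [mul_zero])
  have := ge_of_tendsto hlim (eventually_atTop.2 ⟨1, fun n hn => hsmall n hn⟩)
  exact norm_le_zero_iff.1 this

lemma eq_smul_of_map_add_of_norm_le
    (hadd : ∀ s u, 0 ≤ s → 0 ≤ u → s + u ≤ 1 → h (s + u) = h s + h u)
    (hbd : ∀ s ∈ Icc (0 : ℝ) 1, ‖h s‖ ≤ M * s) {t : ℝ} (ht : t ∈ Icc (0 : ℝ) 1) :
    h t = t • h 1 := by
  refine sub_eq_zero.1 <| eq_zero_of_map_add_of_norm_le (h := fun s => h s - s • h 1)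
    (M := M + ‖h 1‖) (fun s u hs hu hsu => ?_) (fun s hs => ?_) (by simp) ht
  · simp only [hadd s u hs hu hsu, add_smul]
    abel
  · calc ‖h s - s • h 1‖ ≤ ‖h s‖ + ‖s • h 1‖ := norm_sub_le _ _
      _ ≤ M * s + s * ‖h 1‖ := by
        rw [norm_smul, Real.norm_of_nonneg hs.1]
        exact add_le_add_left (hbd s hs) _
      _ = (M + ‖h 1‖) * s := by ring

end UnitInterval

lemma add_smul_div_add_smul {E : Type*} [AddCommGroup E] [Module ℝ E] {a b : ℝ} (hab : a + b ≠ 0)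
    (x y : E) : (a + b) • ((a / (a + b)) • x + (b / (a + b)) • y) = a • x + b • y := by
  rw [smul_add, smul_smul, smul_smul, mul_div_cancel₀ _ hab, mul_div_cancel₀ _ hab]

section AdditiveOn

variable {E F : Type*} [AddGroup E] [AddGroup F] {C : Set E} {f : E → F}

lemma map_zero_of_additiveOn (h0 : (0 : E) ∈ C)
    (hadd : ∀ x ∈ C, ∀ y ∈ C, x + y ∈ C → f (x + y) = f x + f y) : f 0 = 0 := by
  simpa using hadd 0 h0 0 h0 (by simpa using h0)

lemma map_neg_of_additiveOn (hsym : ∀ x ∈ C, -x ∈ C) (h0 : (0 : E) ∈ C)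
    (hadd : ∀ x ∈ C, ∀ y ∈ C, x + y ∈ C → f (x + y) = f x + f y) {c : E} (hc : c ∈ C) :
    f (-c) = -f c := by
  have := hadd c hc (-c) (hsym c hc) (by simpa using h0)
  rw [add_neg_cancel, map_zero_of_additiveOn h0 hadd] at this
  exact (neg_eq_of_add_eq_zero_right this.symm).symm

end AdditiveOn

lemma additiveOn_of_map_midpoint {E F : Type*} [AddCommGroup E] [Module ℝ E] [AddCommGroup F]
    [Module ℝ F] {C : Set E} {f : E → F} (h0 : (0 : E) ∈ C) (hf0 : f 0 = 0)
    (hmid : ∀ x ∈ C, ∀ y ∈ C, f ((1/2 : ℝ) • (x + y)) = (1/2 : ℝ) • (f x + f y)) :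
    ∀ x ∈ C, ∀ y ∈ C, x + y ∈ C → f (x + y) = f x + f y := by
  intro x hx y hy hxy
  have hhalf := hmid (x + y) hxy 0 h0
  rw [add_zero, hf0, add_zero, hmid x hx y hy] at hhalf
  exact (smul_right_injective F (by norm_num : (1/2 : ℝ) ≠ 0) hhalf).symm

section AdditiveOnConvex

variable {E F : Type*} [NormedAddCommGroup E] [NormedSpace ℝ E]
  [NormedAddCommGroup F] [NormedSpace ℝ F] {C : Set E} {f : E → F}

lemma map_smul_of_additiveOn (hconv : Convex ℝ C) (h0 : (0 : E) ∈ C)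
    (hadd : ∀ x ∈ C, ∀ y ∈ C, x + y ∈ C → f (x + y) = f x + f y) {α : ℝ}
    (hbd : ∀ x ∈ C, ‖f x‖ ≤ α * ‖x‖) {c : E} (hc : c ∈ C) {t : ℝ} (ht : t ∈ Icc (0 : ℝ) 1) :
    f (t • c) = t • f c := by
  have hmem : ∀ s ∈ Icc (0 : ℝ) 1, s • c ∈ C := fun s hs => hconv.smul_mem_of_zero_mem h0 hc hs
  simpa using eq_smul_of_map_add_of_norm_le (h := fun s => f (s • c)) (M := α * ‖c‖)
    (fun s u hs hu hsu => by
      rw [add_smul]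
      exact hadd _ (hmem s ⟨hs, by linarith⟩) _ (hmem u ⟨hu, by linarith⟩)
        (by rw [← add_smul]; exact hmem _ ⟨by linarith, hsu⟩))
    (fun s hs => by
      simpa [norm_smul, Real.norm_of_nonneg hs.1, mul_comm, mul_left_comm] using hbd _ (hmem s hs))
    ht

lemma map_add_smul_of_additiveOn (hconv : Convex ℝ C) (h0 : (0 : E) ∈ C)
    (hadd : ∀ x ∈ C, ∀ y ∈ C, x + y ∈ C → f (x + y) = f x + f y) {α : ℝ}
    (hbd : ∀ x ∈ C, ‖f x‖ ≤ α * ‖x‖) {c d : E} (hc : c ∈ C) (hd : d ∈ C) {a b : ℝ}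
    (ha : 0 ≤ a) (hb : 0 ≤ b) (hab : a + b = 1) :
    f (a • c + b • d) = a • f c + b • f d := by
  rw [hadd _ (hconv.smul_mem_of_zero_mem h0 hc ⟨ha, by linarith⟩)
      _ (hconv.smul_mem_of_zero_mem h0 hd ⟨hb, by linarith⟩) (hconv hc hd ha hb hab),
    map_smul_of_additiveOn hconv h0 hadd hbd hc ⟨ha, by linarith⟩,
    map_smul_of_additiveOn hconv h0 hadd hbd hd ⟨hb, by linarith⟩]

lemma smul_map_eq_of_smul_eq (hconv : Convex ℝ C) (h0 : (0 : E) ∈ C)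
    (hadd : ∀ x ∈ C, ∀ y ∈ C, x + y ∈ C → f (x + y) = f x + f y) {α : ℝ}
    (hbd : ∀ x ∈ C, ‖f x‖ ≤ α * ‖x‖) {c d : E} (hc : c ∈ C) (hd : d ∈ C) {t s : ℝ}
    (ht : 0 < t) (hs : 0 < s) (heq : t • c = s • d) : t • f c = s • f d := by
  wlog hts : t ≤ s generalizing t s c d
  · exact (this hd hc hs ht heq.symm (le_of_not_ge hts)).symm
  have hd' : d = (t / s) • c := by
    rw [div_eq_inv_mul, mul_smul, heq, inv_smul_smul₀ hs.ne']
  rw [hd', map_smul_of_additiveOn hconv h0 hadd hbd hc ⟨by positivity, (div_le_one hs).2 hts⟩,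
    smul_smul, mul_div_cancel₀ _ hs.ne']

lemma exists_pos_smul_eq_of_mem_span (hconv : Convex ℝ C) (hsym : ∀ x ∈ C, -x ∈ C)
    (h0 : (0 : E) ∈ C) {x : E} (hx : x ∈ Submodule.span ℝ C) :
    ∃ t : ℝ, 0 < t ∧ ∃ c ∈ C, t • c = x := by
  induction hx using Submodule.span_induction with
  | mem x hx => exact ⟨1, one_pos, x, hx, one_smul ℝ x⟩
  | zero => exact ⟨1, one_pos, 0, h0, smul_zero 1⟩
  | add x y _ _ ihx ihy =>
    obtain ⟨t, ht, c, hc, rfl⟩ := ihx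
    obtain ⟨s, hs, d, hd, rfl⟩ := ihy
    refine ⟨t + s, by positivity, (t / (t + s)) • c + (s / (t + s)) • d,
      hconv hc hd (by positivity) (by positivity) (by field_simp), ?_⟩
    exact add_smul_div_add_smul (by positivity) c d
  | smul a x _ ih =>
    obtain ⟨t, ht, c, hc, rfl⟩ := ih
    rcases lt_trichotomy a 0 with ha | rfl | ha
    · exact ⟨-a * t, by nlinarith, -c, hsym c hc, by module⟩
    · exact ⟨1, one_pos, 0, h0, by simp⟩
    · exact ⟨a * t, by positivity, c, hc, (smul_smul a t c).symm⟩

lemma exists_linearMap_span_eq_of_additiveOn (hconv : Convex ℝ C) (hsym : ∀ x ∈ C, -x ∈ C)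
    (h0 : (0 : E) ∈ C) (hadd : ∀ x ∈ C, ∀ y ∈ C, x + y ∈ C → f (x + y) = f x + f y) {α : ℝ}
    (hbd : ∀ x ∈ C, ‖f x‖ ≤ α * ‖x‖) :
    ∃ g : Submodule.span ℝ C →ₗ[ℝ] F, (∀ x, ‖g x‖ ≤ α * ‖(x : E)‖) ∧
      ∀ c (hc : c ∈ C), g ⟨c, Submodule.subset_span hc⟩ = f c := by
  choose t ht c hc hx using fun x : Submodule.span ℝ C =>
    exists_pos_smul_eq_of_mem_span hconv hsym h0 x.2
  have hval : ∀ (x : Submodule.span ℝ C) (s : ℝ) (d : E), 0 < s → d ∈ C → s • d = (x : E) →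
      t x • f (c x) = s • f d :=
    fun x s d hs hd hxd => smul_map_eq_of_smul_eq hconv h0 hadd hbd (hc x) hd (ht x) hs
      ((hx x).trans hxd.symm)
  refine ⟨⟨⟨fun x => t x • f (c x), fun x y => ?_⟩, fun a x => ?_⟩, fun x => ?_, fun d hd => ?_⟩
  · have htx := ht x
    have hty := ht y
    have hpos : 0 < t x + t y := by positivity
    have hmem : (t x / (t x + t y)) • c x + (t y / (t x + t y)) • c y ∈ C :=
      hconv (hc x) (hc y) (by positivity) (by positivity) (by field_simp)
    calc t (x + y) • f (c (x + y))
        = (t x + t y) • f ((t x / (t x + t y)) • c x + (t y / (t x + t y)) • c y) :=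
          hval _ _ _ hpos hmem (by rw [add_smul_div_add_smul hpos.ne', hx, hx, Submodule.coe_add])
      _ = (t x + t y) • ((t x / (t x + t y)) • f (c x) + (t y / (t x + t y)) • f (c y)) := by
          rw [map_add_smul_of_additiveOn hconv h0 hadd hbd (hc x) (hc y) (by positivity)
            (by positivity) (by field_simp)]
      _ = t x • f (c x) + t y • f (c y) := add_smul_div_add_smul hpos.ne' _ _
  · dsimp only [RingHom.id_apply]
    rcases lt_trichotomy a 0 with ha | rfl | ha
    · rw [hval _ (-a * t x) (-c x) (mul_pos (neg_pos.2 ha) (ht x)) (hsym _ (hc x))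
        (by rw [Submodule.coe_smul, ← hx]; module), map_neg_of_additiveOn hsym h0 hadd (hc x)]
      module
    · rw [hval _ 1 0 one_pos h0 (by simp), map_zero_of_additiveOn h0 hadd, smul_zero, zero_smul]
    · rw [hval _ (a * t x) (c x) (mul_pos ha (ht x)) (hc x)
        (by rw [Submodule.coe_smul, ← hx, smul_smul]), smul_smul]
  · calc ‖t x • f (c x)‖ = t x * ‖f (c x)‖ := by rw [norm_smul, Real.norm_of_nonneg (ht x).le]
      _ ≤ t x * (α * ‖c x‖) := mul_le_mul_of_nonneg_left (hbd _ (hc x)) (ht x).le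
      _ = α * ‖(x : E)‖ := by rw [← hx, norm_smul, Real.norm_of_nonneg (ht x).le]; ring
  · simpa using hval _ 1 d one_pos hd (one_smul ℝ d)

lemma exists_continuousLinearMap_eqOn_of_additiveOn [CompleteSpace F] (hconv : Convex ℝ C)
    (hsym : ∀ x ∈ C, -x ∈ C) (h0 : (0 : E) ∈ C)
    (hdense : Dense ((Submodule.span ℝ C : Submodule ℝ E) : Set E))
    (hadd : ∀ x ∈ C, ∀ y ∈ C, x + y ∈ C → f (x + y) = f x + f y) {α : ℝ}
    (hbd : ∀ x ∈ C, ‖f x‖ ≤ α * ‖x‖) :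
    ∃ g : E →L[ℝ] F, ∀ x ∈ C, g x = f x := by
  obtain ⟨g, hg_bd, hg_eq⟩ := exists_linearMap_span_eq_of_additiveOn hconv hsym h0 hadd hbd
  have hdr : DenseRange (Submodule.span ℝ C).subtype := by
    simpa [DenseRange] using hdense
  exact ⟨g.extendOfNorm (Submodule.span ℝ C).subtype, fun x hx =>
    (LinearMap.extendOfNorm_eq hdr ⟨α, hg_bd⟩ ⟨x, _⟩).trans (hg_eq x hx)⟩

end AdditiveOnConvex

/-- For a bounded map `f` on a symmetric convex generating subset `C` of a real normed
space, the following are equivalent: (1) `f` respects the convex structure (`f 0 = 0` and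
`f` preserves midpoints); (2) `f` is additive on `C`; (3) `f` extends to a bounded
linear map `E → F`. -/
theorem convexMap_linear_tfae
    {E F : Type*} [NormedAddCommGroup E] [NormedSpace ℝ E]
    [NormedAddCommGroup F] [NormedSpace ℝ F] [CompleteSpace F]
    (C : Set E) (hconv : Convex ℝ C) (hsym : ∀ x ∈ C, -x ∈ C) (h0 : (0 : E) ∈ C)
    (hdense : Dense ((Submodule.span ℝ C : Submodule ℝ E) : Set E))
    (f : E → F) (α : ℝ) (hbd : ∀ x ∈ C, ‖f x‖ ≤ α * ‖x‖) :
    ((f 0 = 0 ∧ ∀ x ∈ C, ∀ y ∈ C, f ((1/2 : ℝ) • (x + y)) = (1/2 : ℝ) • (f x + f y))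
        ↔ (∀ x ∈ C, ∀ y ∈ C, x + y ∈ C → f (x + y) = f x + f y)) ∧
    ((f 0 = 0 ∧ ∀ x ∈ C, ∀ y ∈ C, f ((1/2 : ℝ) • (x + y)) = (1/2 : ℝ) • (f x + f y))
        ↔ ∃ g : E →L[ℝ] F, ∀ x ∈ C, g x = f x) := by
  have h12 : (f 0 = 0 ∧ ∀ x ∈ C, ∀ y ∈ C, f ((1/2 : ℝ) • (x + y)) = (1/2 : ℝ) • (f x + f y))
      ↔ (∀ x ∈ C, ∀ y ∈ C, x + y ∈ C → f (x + y) = f x + f y) := by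
    refine ⟨fun ⟨hf0, hmid⟩ => additiveOn_of_map_midpoint h0 hf0 hmid, fun hadd => ?_⟩
    refine ⟨map_zero_of_additiveOn h0 hadd, fun x hx y hy => ?_⟩
    rw [smul_add, smul_add]
    exact map_add_smul_of_additiveOn hconv h0 hadd hbd hx hy (by norm_num) (by norm_num)
      (by norm_num)
  refine ⟨h12, fun h1 => exists_continuousLinearMap_eqOn_of_additiveOn hconv hsym h0 hdense
    (h12.1 h1) hbd, fun ⟨g, hg⟩ => ⟨by rw [← hg 0 h0, map_zero], fun x hx y hy => ?_⟩⟩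
  have hmid : (1/2 : ℝ) • (x + y) ∈ C := by
    rw [smul_add]
    exact hconv hx hy (by norm_num) (by norm_num) (by norm_num)
  rw [← hg _ hmid, ← hg x hx, ← hg y hy, map_smul, map_add]
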